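/- Let C ∈ Matrix (Fin 3) (Fin 3) ℝ be skew-symmetric (Cᵀ = −C), let A, B ∈ Matrix (Fin 3) (Fin 2) ℝ be fixed, and let E, K : ℝ → Matrix (Fin 3) (Fin 2) ℝ be differentiable with E'(s) = C (E(s) + A) and K'(s) = C (K(s) + B) for all s ∈ ℝ. Then the function U₃(s) = (E(s) + A)ᵀ C (K(s) + B) is constant on ℝ. (First integral U₃ of the characteristic system in the proof of the representation theorem.) -/

import Mathlib

open Matrix

def HasEntrywiseDerivAt {m n : Type*} (X : ℝ → Matrix m n ℝ) (X' : Matrix m n ℝ) (s : ℝ) :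
    Prop :=
  ∀ i j, HasDerivAt (fun u => X u i j) (X' i j) s

namespace HasEntrywiseDerivAt

variable {m n p : Type*} {X : ℝ → Matrix m n ℝ} {X' : Matrix m n ℝ} {s : ℝ}

theorem const (M : Matrix m n ℝ) (s : ℝ) : HasEntrywiseDerivAt (fun _ => M) 0 s :=
  fun _ _ => hasDerivAt_const s _

theorem add_const (hX : HasEntrywiseDerivAt X X' s) (M : Matrix m n ℝ) :
    HasEntrywiseDerivAt (fun u => X u + M) X' s :=
  fun i j => (hX i j).add_const (M i j)

theorem transpose (hX : HasEntrywiseDerivAt X X' s) :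
    HasEntrywiseDerivAt (fun u => (X u)ᵀ) X'ᵀ s :=
  fun i j => hX j i

theorem mul [Fintype n] {Y : ℝ → Matrix n p ℝ} {Y' : Matrix n p ℝ}
    (hX : HasEntrywiseDerivAt X X' s) (hY : HasEntrywiseDerivAt Y Y' s) :
    HasEntrywiseDerivAt (fun u => X u * Y u) (X' * Y s + X s * Y') s := by
  intro i k
  simp only [mul_apply, Matrix.add_apply, ← Finset.sum_add_distrib]
  exact HasDerivAt.fun_sum fun j _ => (hX i j).fun_mul (hY j k)

theorem eq_of_forall_zero (hX : ∀ s, HasEntrywiseDerivAt X 0 s)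
    (s t : ℝ) : X s = X t := by
  ext i j
  exact is_const_of_deriv_eq_zero (fun u => (hX u i j).differentiableAt)
    (fun u => (hX u i j).deriv) s t

end HasEntrywiseDerivAt

/-- Under the flow `X' = C X` with `C` skew-symmetric, the form `Xᵀ C Y` has zero derivative. -/
theorem transpose_mul_mul_add_transpose_mul_mul_eq_zero {R m n p : Type*} [CommRing R]
    [Fintype n] {C : Matrix n n R} (hC : Cᵀ = -C) (X : Matrix n m R) (Y : Matrix n p R) :
    (C * X)ᵀ * C * Y + Xᵀ * C * (C * Y) = 0 := by
  rw [transpose_mul, hC, Matrix.mul_neg, Matrix.neg_mul, Matrix.neg_mul, neg_add_eq_zero]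
  simp only [Matrix.mul_assoc]

theorem first_integral_U3
    (C : Matrix (Fin 3) (Fin 3) ℝ) (hC : Cᵀ = -C)
    (A B : Matrix (Fin 3) (Fin 2) ℝ)
    (E K : ℝ → Matrix (Fin 3) (Fin 2) ℝ)
    (hE : ∀ (s : ℝ) (i : Fin 3) (j : Fin 2),
      HasDerivAt (fun u => E u i j) ((C * (E s + A)) i j) s)
    (hK : ∀ (s : ℝ) (i : Fin 3) (j : Fin 2),
      HasDerivAt (fun u => K u i j) ((C * (K s + B)) i j) s) :
    ∀ s : ℝ, (E s + A)ᵀ * C * (K s + B) = (E 0 + A)ᵀ * C * (K 0 + B) := by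
  have hU : ∀ s, HasEntrywiseDerivAt (fun u => (E u + A)ᵀ * C * (K u + B)) 0 s := by
    intro s
    have h := (((HasEntrywiseDerivAt.add_const (hE s) A).transpose.mul
      (HasEntrywiseDerivAt.const C s)).mul (HasEntrywiseDerivAt.add_const (hK s) B))
    simpa only [Matrix.mul_zero, add_zero,
      transpose_mul_mul_add_transpose_mul_mul_eq_zero hC] using h
  exact fun s => HasEntrywiseDerivAt.eq_of_forall_zero hU s 0
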